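/- Substituting μ = μ̄(θ, t*(θ)) and t = t*(θ) = (FᵀF)⁻¹Fᵀ(x_q − R(θ)x_p) into J₁(μ, t, θ) = (1/σ_p²)‖x_p − μ‖² + (1/σ_q²)‖x_q − R(θ)μ − Ft‖² yields J₁(μ*(θ), t*(θ), θ) = (1/(σ_p² + σ_q²))·‖x_q − R(θ)x_p‖²_Q, where ‖z‖²_Q = zᵀQz and Q = I_{2n} − F(FᵀF)⁻¹Fᵀ. -/

import Mathlib

open Matrix Real Kronecker
noncomputable def rot (θ : ℝ) : Matrix (Fin 2) (Fin 2) ℝ :=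
  !![Real.cos θ, -Real.sin θ; Real.sin θ, Real.cos θ]
noncomputable def Fmat (n : ℕ) : Matrix (Fin n × Fin 2) (Fin 1 × Fin 2) ℝ :=
  (Matrix.of fun (_ : Fin n) (_ : Fin 1) => (1 : ℝ)) ⊗ₖ (1 : Matrix (Fin 2) (Fin 2) ℝ)
noncomputable def Qmat (n : ℕ) : Matrix (Fin n × Fin 2) (Fin n × Fin 2) ℝ :=
  1 - Fmat n * ((Fmat n)ᵀ * Fmat n)⁻¹ * (Fmat n)ᵀ
noncomputable def Rblk (m : ℕ) (θ : ℝ) : Matrix (Fin m × Fin 2) (Fin m × Fin 2) ℝ :=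
  (1 : Matrix (Fin m) (Fin m) ℝ) ⊗ₖ rot θ
noncomputable def sqn {ι : Type*} [Fintype ι] (z : ι → ℝ) : ℝ := z ⬝ᵥ z

/-!
Write `z = x_q - R x_p` and `w = Q z`. The least-squares translation satisfies `F t* = z - w`,
so `x_q - F t* = R x_p + w`, and by orthogonality of `R` the posterior mean is
`μ* = x_p + σ_p²/(σ_p² + σ_q²) Rᵀ w`. The two residuals are then `-σ_p²/(σ_p² + σ_q²) Rᵀ w` and
`σ_q²/(σ_p² + σ_q²) w`, whose weighted squared norms add up to `‖w‖²/(σ_p² + σ_q²)`; finally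
`‖Q z‖² = zᵀ Q z` since `Q` is a symmetric idempotent. The latter needs no invertibility of `FᵀF`:
`A⁻¹ A A⁻¹ = A⁻¹` holds for every square matrix, because `A⁻¹ = 0` when `A` is singular.
-/

lemma rot_transpose_mul_self (θ : ℝ) : (rot θ)ᵀ * rot θ = 1 := by
  ext i j
  fin_cases i <;> fin_cases j <;>
    simp [rot, Matrix.mul_apply, Fin.sum_univ_succ, mul_comm] <;> nlinarith [sin_sq_add_cos_sq θ]

lemma Rblk_transpose_mul_self (m : ℕ) (θ : ℝ) : (Rblk m θ)ᵀ * Rblk m θ = 1 := by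
  rw [Rblk, ← kroneckerMap_transpose, transpose_one, ← mul_kronecker_mul, one_mul,
    rot_transpose_mul_self, one_kronecker_one]

namespace Matrix

variable {m k : Type*} [Fintype m] [Fintype k] [DecidableEq k]

lemma nonsing_inv_mul_mul_nonsing_inv {α : Type*} [CommRing α] (A : Matrix k k α) :
    A⁻¹ * A * A⁻¹ = A⁻¹ := by
  by_cases hA : IsUnit A.det
  · rw [nonsing_inv_mul A hA, Matrix.one_mul]
  · rw [nonsing_inv_apply_not_isUnit A hA, Matrix.zero_mul, Matrix.zero_mul]

variable [DecidableEq m]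

lemma sqn_mulVec_of_transpose_mul_self {R : Matrix m m ℝ} (hR : Rᵀ * R = 1) (v : m → ℝ) :
    sqn (R *ᵥ v) = sqn v := by
  rw [sqn, dotProduct_mulVec, ← mulVec_transpose, mulVec_mulVec, hR, one_mulVec, sqn]

noncomputable def residualProj (F : Matrix m k ℝ) : Matrix m m ℝ :=
  1 - F * (Fᵀ * F)⁻¹ * Fᵀ

lemma residualProj_transpose (F : Matrix m k ℝ) : (residualProj F)ᵀ = residualProj F := by
  rw [residualProj, transpose_sub, transpose_one, transpose_mul, transpose_mul, transpose_transpose,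
    transpose_nonsing_inv, transpose_mul, transpose_transpose, Matrix.mul_assoc]

lemma residualProj_mul_self (F : Matrix m k ℝ) :
    residualProj F * residualProj F = residualProj F := by
  have hP : F * (Fᵀ * F)⁻¹ * Fᵀ * (F * (Fᵀ * F)⁻¹ * Fᵀ) = F * (Fᵀ * F)⁻¹ * Fᵀ := by
    calc F * (Fᵀ * F)⁻¹ * Fᵀ * (F * (Fᵀ * F)⁻¹ * Fᵀ)
        = F * ((Fᵀ * F)⁻¹ * (Fᵀ * F) * (Fᵀ * F)⁻¹) * Fᵀ := by simp only [Matrix.mul_assoc]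
      _ = F * (Fᵀ * F)⁻¹ * Fᵀ := by rw [nonsing_inv_mul_mul_nonsing_inv, Matrix.mul_assoc]
  rw [residualProj, sub_mul, Matrix.one_mul, mul_sub, Matrix.mul_one, hP, sub_self, sub_zero]

lemma dotProduct_residualProj_mulVec (F : Matrix m k ℝ) (z : m → ℝ) :
    z ⬝ᵥ residualProj F *ᵥ z = sqn (residualProj F *ᵥ z) := by
  rw [sqn, dotProduct_mulVec (residualProj F *ᵥ z), ← mulVec_transpose, residualProj_transpose,
    mulVec_mulVec, residualProj_mul_self, dotProduct_comm]

lemma mulVec_leastSquares_eq_sub_residualProj (F : Matrix m k ℝ) (z : m → ℝ) :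
    F *ᵥ (((Fᵀ * F)⁻¹ * Fᵀ) *ᵥ z) = z - residualProj F *ᵥ z := by
  rw [mulVec_mulVec, ← Matrix.mul_assoc, residualProj, sub_mulVec, one_mulVec, sub_sub_cancel]

end Matrix

lemma sqn_smul {ι : Type*} [Fintype ι] (c : ℝ) (v : ι → ℝ) : sqn (c • v) = c ^ 2 * sqn v := by
  rw [sqn, sqn, smul_dotProduct, dotProduct_smul, smul_smul, smul_eq_mul, sq]

lemma sqn_neg {ι : Type*} [Fintype ι] (v : ι → ℝ) : sqn (-v) = sqn v := by
  rw [sqn, sqn, neg_dotProduct, dotProduct_neg, neg_neg]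

section PosteriorMean

variable {m : Type*} [Fintype m] [DecidableEq m] {a b : ℝ} {R : Matrix m m ℝ} (xp w : m → ℝ)

lemma posteriorMean_eq (ha : a ≠ 0) (hb : b ≠ 0) (hab : a + b ≠ 0) (hR : Rᵀ * R = 1) :
    (a * b / (a + b)) • ((1 / a) • xp + (1 / b) • Rᵀ *ᵥ (R *ᵥ xp + w))
      = xp + (a / (a + b)) • Rᵀ *ᵥ w := by
  rw [mulVec_add, mulVec_mulVec, hR, one_mulVec]
  match_scalars <;> field_simp
  ring

lemma weighted_sqn_residuals_posteriorMean (hab : a + b ≠ 0) (hR : Rᵀ * R = 1) :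
    (1 / a) * sqn (xp - (xp + (a / (a + b)) • Rᵀ *ᵥ w))
      + (1 / b) * sqn (R *ᵥ xp + w - R *ᵥ (xp + (a / (a + b)) • Rᵀ *ᵥ w))
      = (1 / (a + b)) * sqn w := by
  have hRRt : R * Rᵀ = 1 := mul_eq_one_comm.mp hR
  have hp : xp - (xp + (a / (a + b)) • Rᵀ *ᵥ w) = -((a / (a + b)) • Rᵀ *ᵥ w) := by abel
  have hq : R *ᵥ xp + w - R *ᵥ (xp + (a / (a + b)) • Rᵀ *ᵥ w) = (b / (a + b)) • w := by
    rw [mulVec_add, mulVec_smul, mulVec_mulVec, hRRt, one_mulVec]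
    match_scalars <;> field_simp <;> ring
  have hweights : 1 / a * (a / (a + b)) ^ 2 + 1 / b * (b / (a + b)) ^ 2 = 1 / (a + b) := by
    have hinv (c : ℝ) : c⁻¹ * c ^ 2 = c := by rw [sq, ← mul_assoc, inv_mul_mul_self]
    calc 1 / a * (a / (a + b)) ^ 2 + 1 / b * (b / (a + b)) ^ 2
        = (a⁻¹ * a ^ 2 + b⁻¹ * b ^ 2) * (a + b)⁻¹ ^ 2 := by ring
      _ = 1 / (a + b) := by rw [hinv, hinv]; field_simp
  rw [hp, hq, sqn_neg, sqn_smul, sqn_smul,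
    sqn_mulVec_of_transpose_mul_self (by rwa [transpose_transpose])]
  linear_combination sqn w * hweights

end PosteriorMean

theorem J1_concentrated_general (n : ℕ) (θ : ℝ) (σp σq : ℝ) (hp : 0 < σp) (hq : 0 < σq)
    (xp xq : Fin n × Fin 2 → ℝ) :
    let tstar : Fin 1 × Fin 2 → ℝ :=
      (((Fmat n)ᵀ * Fmat n)⁻¹ * (Fmat n)ᵀ).mulVec (xq - (Rblk n θ).mulVec xp)
    let μstar : Fin n × Fin 2 → ℝ :=
      (σp ^ 2 * σq ^ 2 / (σp ^ 2 + σq ^ 2)) •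
        ((1 / σp ^ 2) • xp
          + (1 / σq ^ 2) • (Rblk n θ)ᵀ.mulVec (xq - (Fmat n).mulVec tstar))
    (1 / σp ^ 2) * sqn (xp - μstar)
      + (1 / σq ^ 2) * sqn (xq - (Rblk n θ).mulVec μstar - (Fmat n).mulVec tstar)
      = (1 / (σp ^ 2 + σq ^ 2)) *
          ((xq - (Rblk n θ).mulVec xp) ⬝ᵥ (Qmat n).mulVec (xq - (Rblk n θ).mulVec xp)) := by
  intro tstar μstar
  have hab : σp ^ 2 + σq ^ 2 ≠ 0 := by positivity
  have hR := Rblk_transpose_mul_self n θ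
  set w := residualProj (Fmat n) *ᵥ (xq - Rblk n θ *ᵥ xp)
  have hfit : xq - Fmat n *ᵥ tstar = Rblk n θ *ᵥ xp + w := by
    rw [mulVec_leastSquares_eq_sub_residualProj]
    abel
  have hμ : μstar = xp + (σp ^ 2 / (σp ^ 2 + σq ^ 2)) • (Rblk n θ)ᵀ *ᵥ w := by
    simp only [μstar, hfit]
    exact posteriorMean_eq xp w (by positivity) (by positivity) hab hR
  rw [hμ, sub_right_comm, hfit, weighted_sqn_residuals_posteriorMean xp w hab hR, Qmat,
    ← residualProj, dotProduct_residualProj_mulVec]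

theorem J1_concentrated (n : ℕ) (hn : 1 ≤ n) (θ : ℝ) (σp σq : ℝ) (hp : 0 < σp) (hq : 0 < σq)
    (xp xq : Fin n × Fin 2 → ℝ) :
    let tstar : Fin 1 × Fin 2 → ℝ :=
      (((Fmat n)ᵀ * Fmat n)⁻¹ * (Fmat n)ᵀ).mulVec (xq - (Rblk n θ).mulVec xp)
    let μstar : Fin n × Fin 2 → ℝ :=
      (σp ^ 2 * σq ^ 2 / (σp ^ 2 + σq ^ 2)) •
        ((1 / σp ^ 2) • xp
          + (1 / σq ^ 2) • (Rblk n θ)ᵀ.mulVec (xq - (Fmat n).mulVec tstar))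
    (1 / σp ^ 2) * sqn (xp - μstar)
      + (1 / σq ^ 2) * sqn (xq - (Rblk n θ).mulVec μstar - (Fmat n).mulVec tstar)
      = (1 / (σp ^ 2 + σq ^ 2)) *
          ((xq - (Rblk n θ).mulVec xp) ⬝ᵥ (Qmat n).mulVec (xq - (Rblk n θ).mulVec xp)) :=
  J1_concentrated_general n θ σp σq hp hq xp xq
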